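/- arXiv:1703.03794 — 10 statements merged into one kernel-verified Lean document; each statement's English description precedes it below -/
import Mathlib

section
/- The chain of adjunctions comp₁ ⊣ m ⊣ comp₂ ⊣ m̄ ⊣ comp₁ holds between the mixed category mC and C, where m(X) = (X,X,F_X,id_X), m̄(X) = (X,X,id_X,F_X), and comp_i are the component functors. -/
open CategoryTheory CategoryTheory.Limits

universe v u

variable {C : Type u} [Category.{v} C]

/-- The twisted category `tC` attached to a category `C` with an endomorphism `F` of the
identity functor: objects are pairs `(X, Φ)` with `Φ ≫ Φ = F.app X`. -/
structure Twisted (C : Type u) [Category.{v} C] (F : 𝟭 C ⟶ 𝟭 C) where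
  X : C
  tw : X ⟶ X
  tw_tw : tw ≫ tw = F.app X

namespace Twisted

variable {F : 𝟭 C ⟶ 𝟭 C}

instance : Category (Twisted C F) where
  Hom A B := { f : A.X ⟶ B.X // A.tw ≫ f = f ≫ B.tw }
  id A := ⟨𝟙 A.X, by simp⟩
  comp {A B D} f g := ⟨f.1 ≫ g.1, by
    rw [← Category.assoc, f.2, Category.assoc, g.2, ← Category.assoc]⟩
  id_comp f := Subtype.ext (Category.id_comp _)
  comp_id f := Subtype.ext (Category.comp_id _)
  assoc f g h := Subtype.ext (Category.assoc _ _ _)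

end Twisted

/-- The mixed category `mC`: objects are quadruples `(X₁, X₂, φ₁, φ₂)` with
`φ₁ ≫ φ₂ = F.app X₁` and `φ₂ ≫ φ₁ = F.app X₂`. -/
structure Mixed (C : Type u) [Category.{v} C] (F : 𝟭 C ⟶ 𝟭 C) where
  X₁ : C
  X₂ : C
  φ₁ : X₁ ⟶ X₂
  φ₂ : X₂ ⟶ X₁
  h₁ : φ₁ ≫ φ₂ = F.app X₁
  h₂ : φ₂ ≫ φ₁ = F.app X₂

namespace Mixed

variable {F : 𝟭 C ⟶ 𝟭 C}

instance : Category (Mixed C F) where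
  Hom A B := { p : (A.X₁ ⟶ B.X₁) × (A.X₂ ⟶ B.X₂) //
      A.φ₁ ≫ p.2 = p.1 ≫ B.φ₁ ∧ A.φ₂ ≫ p.1 = p.2 ≫ B.φ₂ }
  id A := ⟨(𝟙 _, 𝟙 _), by simp⟩
  comp {A B D} f g := ⟨(f.1.1 ≫ g.1.1, f.1.2 ≫ g.1.2), by
    constructor
    · rw [← Category.assoc, f.2.1, Category.assoc, g.2.1, ← Category.assoc]
    · rw [← Category.assoc, f.2.2, Category.assoc, g.2.2, ← Category.assoc]⟩
  id_comp f := Subtype.ext (Prod.ext_iff.mpr ⟨Category.id_comp _, Category.id_comp _⟩)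
  comp_id f := Subtype.ext (Prod.ext_iff.mpr ⟨Category.comp_id _, Category.comp_id _⟩)
  assoc f g h := Subtype.ext (Prod.ext_iff.mpr ⟨Category.assoc _ _ _, Category.assoc _ _ _⟩)

end Mixed

/-- The first component functor `comp₁ : mC ⥤ C`. -/
def comp₁ (F : 𝟭 C ⟶ 𝟭 C) : Mixed C F ⥤ C where
  obj A := A.X₁
  map f := f.1.1
  map_id _ := rfl
  map_comp _ _ := rfl

/-- The second component functor `comp₂ : mC ⥤ C`. -/
def comp₂ (F : 𝟭 C ⟶ 𝟭 C) : Mixed C F ⥤ C where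
  obj A := A.X₂
  map f := f.1.2
  map_id _ := rfl
  map_comp _ _ := rfl

/-- The mixing functor `m : C ⥤ mC`, `X ↦ (X, X, F_X, id_X)`. -/
def mixM (F : 𝟭 C ⟶ 𝟭 C) : C ⥤ Mixed C F where
  obj X := ⟨X, X, F.app X, 𝟙 X, by simp, by simp⟩
  map {X Y} f := ⟨(f, f), by
    constructor
    · simpa using (F.naturality f).symm
    · simp⟩
  map_id _ := rfl
  map_comp _ _ := rfl

/-- The anti-mixing functor `m̄ : C ⥤ mC`, `X ↦ (X, X, id_X, F_X)`. -/
def mixMbar (F : 𝟭 C ⟶ 𝟭 C) : C ⥤ Mixed C F where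
  obj X := ⟨X, X, 𝟙 X, F.app X, by simp, by simp⟩
  map {X Y} f := ⟨(f, f), by
    constructor
    · simp
    · simpa using (F.naturality f).symm⟩
  map_id _ := rfl
  map_comp _ _ := rfl

/-- The twisting functor `τ* : mC ⥤ mC`, swapping the two halves of a mixed object. -/
def tau (F : 𝟭 C ⟶ 𝟭 C) : Mixed C F ⥤ Mixed C F where
  obj A := ⟨A.X₂, A.X₁, A.φ₂, A.φ₁, A.h₂, A.h₁⟩
  map f := ⟨(f.1.2, f.1.1), ⟨f.2.2, f.2.1⟩⟩
  map_id _ := rfl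
  map_comp _ _ := rfl

/-- The twixing functor `δ* : tC ⥤ mC`, `(X, Φ) ↦ (X, X, Φ, Φ)`. -/
def deltaStar (F : 𝟭 C ⟶ 𝟭 C) : Twisted C F ⥤ Mixed C F where
  obj A := ⟨A.X, A.X, A.tw, A.tw, A.tw_tw, A.tw_tw⟩
  map f := ⟨(f.1, f.1), ⟨f.2, f.2⟩⟩
  map_id _ := rfl
  map_comp _ _ := rfl

/-! A morphism into `m Y` is determined by its first component and a morphism out of `m X` by its
second, which gives `comp₁ ⊣ m ⊣ comp₂` directly. The swap `τ` of the two components is an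
involutive automorphism of `mC` with `τ ⋙ comp₁ = comp₂`, `τ ⋙ comp₂ = comp₁` and `m ⋙ τ = m̄`
on the nose, so composing with `τ ⊣ τ` turns these into `comp₂ ⊣ m̄ ⊣ comp₁`. -/

namespace Mixed

variable {F : 𝟭 C ⟶ 𝟭 C}

@[ext]
lemma hom_ext {A B : Mixed C F} {f g : A ⟶ B} (h₁ : f.1.1 = g.1.1) (h₂ : f.1.2 = g.1.2) :
    f = g :=
  Subtype.ext (Prod.ext h₁ h₂)

lemma hom_to_mixM_snd {A : Mixed C F} {Y : C} (g : A ⟶ (mixM F).obj Y) :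
    g.1.2 = A.φ₂ ≫ g.1.1 := by
  simpa [mixM] using g.2.2.symm

lemma hom_from_mixM_fst {X : C} {B : Mixed C F} (g : (mixM F).obj X ⟶ B) :
    g.1.1 = g.1.2 ≫ B.φ₂ := by
  simpa [mixM] using g.2.2

def homMixMEquiv (A : Mixed C F) (Y : C) : (A.X₁ ⟶ Y) ≃ (A ⟶ (mixM F).obj Y) where
  toFun f := ⟨(f, A.φ₂ ≫ f),
    by simpa [mixM, reassoc_of% A.h₁] using (F.naturality f).symm, by simp [mixM]⟩
  invFun g := g.1.1
  left_inv _ := rfl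
  right_inv g := hom_ext rfl (hom_to_mixM_snd g).symm

def mixMHomEquiv (X : C) (B : Mixed C F) : ((mixM F).obj X ⟶ B) ≃ (X ⟶ B.X₂) where
  toFun g := g.1.2
  invFun f := ⟨(f ≫ B.φ₂, f), by simpa [mixM, B.h₂] using (F.naturality f).symm, by simp [mixM]⟩
  left_inv g := hom_ext (hom_from_mixM_fst g).symm rfl
  right_inv _ := rfl

variable (F)

def tauEquivalence : Mixed C F ≌ Mixed C F :=
  CategoryTheory.Equivalence.mk (tau F) (tau F) (Iso.refl _) (Iso.refl _)

def comp₁AdjMixM : comp₁ F ⊣ mixM F :=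
  Adjunction.mkOfHomEquiv
    { homEquiv := homMixMEquiv
      homEquiv_naturality_left_symm _ _ := rfl
      homEquiv_naturality_right _ _ := hom_ext rfl (Category.assoc _ _ _).symm }

def mixMAdjComp₂ : mixM F ⊣ comp₂ F :=
  Adjunction.mkOfHomEquiv
    { homEquiv := mixMHomEquiv
      homEquiv_naturality_left_symm _ _ := hom_ext (Category.assoc _ _ _) rfl
      homEquiv_naturality_right _ _ := rfl }

def comp₂AdjMixMbar : comp₂ F ⊣ mixMbar F :=
  (tauEquivalence F).toAdjunction.comp (comp₁AdjMixM F)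

def mixMbarAdjComp₁ : mixMbar F ⊣ comp₁ F :=
  (mixMAdjComp₂ F).comp (tauEquivalence F).toAdjunction

end Mixed

/-- The chain of adjunctions `comp₁ ⊣ m ⊣ comp₂ ⊣ m̄ ⊣ comp₁` between the
mixed category `mC` and `C`. -/
theorem adjunction_chain {C : Type u} [Category.{v} C] (F : 𝟭 C ⟶ 𝟭 C) :
    Nonempty (comp₁ F ⊣ mixM F) ∧ Nonempty (mixM F ⊣ comp₂ F) ∧
      Nonempty (comp₂ F ⊣ mixMbar F) ∧ Nonempty (mixMbar F ⊣ comp₁ F) :=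
  ⟨⟨Mixed.comp₁AdjMixM F⟩, ⟨Mixed.mixMAdjComp₂ F⟩,
    ⟨Mixed.comp₂AdjMixMbar F⟩, ⟨Mixed.mixMbarAdjComp₁ F⟩⟩
end

section
/- A mixed object (X₁,X₂,Φ₁,Φ₂) is isomorphic in mC to m(X) for some object X of C (i.e., is visible) if and only if the mixing map Φ₂ : X₂ → X₁ is an isomorphism. -/
open CategoryTheory CategoryTheory.Limits

universe v u

variable {C : Type u} [Category.{v} C]

namespace Mixed

variable {F : 𝟭 C ⟶ 𝟭 C} {A B : Mixed C F}

def isoMk (e₁ : A.X₁ ≅ B.X₁) (e₂ : A.X₂ ≅ B.X₂) (w₁ : A.φ₁ ≫ e₂.hom = e₁.hom ≫ B.φ₁)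
    (w₂ : A.φ₂ ≫ e₁.hom = e₂.hom ≫ B.φ₂) : A ≅ B where
  hom := ⟨(e₁.hom, e₂.hom), w₁, w₂⟩
  inv := ⟨(e₁.inv, e₂.inv),
    by simp [Iso.comp_inv_eq, w₁],
    by simp [Iso.comp_inv_eq, w₂]⟩
  hom_inv_id := Subtype.ext (Prod.ext e₁.hom_inv_id e₂.hom_inv_id)
  inv_hom_id := Subtype.ext (Prod.ext e₁.inv_hom_id e₂.inv_hom_id)

theorem isIso_φ₂_of_iso (e : A ≅ B) [IsIso B.φ₂] : IsIso A.φ₂ := by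
  let e₁ : A.X₁ ≅ B.X₁ := (comp₁ F).mapIso e
  let e₂ : A.X₂ ≅ B.X₂ := (comp₂ F).mapIso e
  have h : A.φ₂ = e₂.hom ≫ B.φ₂ ≫ e₁.inv := by
    rw [← Category.assoc, Iso.eq_comp_inv]
    exact e.hom.2.2
  rw [h]
  infer_instance

instance isIso_mixM_obj_φ₂ (X : C) : IsIso ((mixM F).obj X).φ₂ :=
  inferInstanceAs (IsIso (𝟙 X))

noncomputable def isoMixMOfIsIso [IsIso A.φ₂] : A ≅ (mixM F).obj A.X₁ :=
  isoMk (Iso.refl A.X₁) (asIso A.φ₂ : A.X₂ ≅ A.X₁) (by simpa [mixM] using A.h₁) (by simp [mixM])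

end Mixed

/-- A mixed object `(X₁, X₂, Φ₁, Φ₂)` is visible (isomorphic to `m X` for some
ordinary object `X`) if and only if the mixing map `Φ₂ : X₂ ⟶ X₁` is an isomorphism. -/
theorem visible_iff_isIso {C : Type u} [Category.{v} C] (F : 𝟭 C ⟶ 𝟭 C) (A : Mixed C F) :
    (∃ X : C, Nonempty (A ≅ (mixM F).obj X)) ↔ IsIso A.φ₂ := by
  constructor
  · rintro ⟨X, ⟨e⟩⟩
    exact Mixed.isIso_φ₂_of_iso e
  · intro _
    exact ⟨A.X₁, ⟨Mixed.isoMixMOfIsIso⟩⟩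
end

section
/- If X is a visible mixed object (of the form m(X₀)) and Ỹ = (Y₁,Y₂,Ψ₁,Ψ₂) is any mixed object, then the map Hom_{mC}(X, Ỹ) → Hom_C(X₀, Y₂) sending (f₁,f₂) to f₂ is a bijection, natural in X and Ỹ. -/
open CategoryTheory CategoryTheory.Limits

universe v u

variable {C : Type u} [Category.{v} C]

lemma mixM_hom_fst_eq {F : 𝟭 C ⟶ 𝟭 C} {X₀ : C} {Yt : Mixed C F}
    (f : (mixM F).obj X₀ ⟶ Yt) : f.1.1 = f.1.2 ≫ Yt.φ₂ := by
  simpa [mixM] using f.2.2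

/-- The inverse `g ↦ (g ≫ Yt.φ₂, g)` respects the `φ₁`'s because `Yt.φ₂ ≫ Yt.φ₁ = F.app Yt.X₂`
and `F` is natural. -/
def mixMHomEquiv (F : 𝟭 C ⟶ 𝟭 C) (X₀ : C) (Yt : Mixed C F) :
    ((mixM F).obj X₀ ⟶ Yt) ≃ (X₀ ⟶ Yt.X₂) where
  toFun f := f.1.2
  invFun g := ⟨(g ≫ Yt.φ₂, g), by
    constructor
    · change F.app X₀ ≫ g = (g ≫ Yt.φ₂) ≫ Yt.φ₁
      rw [Category.assoc, Yt.h₂]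
      exact (F.naturality g).symm
    · simp [mixM]⟩
  left_inv f := Subtype.ext (Prod.ext (mixM_hom_fst_eq f).symm rfl)
  right_inv _ := rfl

/-- If `X = m X₀` is a visible mixed object and `Ỹ` is any mixed object, then
`Hom_{mC}(m X₀, Ỹ) → Hom_C(X₀, Y₂)`, `(f₁, f₂) ↦ f₂`, is a bijection, natural in both
variables. -/
theorem visible_hom_bijective {C : Type u} [Category.{v} C] (F : 𝟭 C ⟶ 𝟭 C)
    (X₀ : C) (Yt : Mixed C F) :
    Function.Bijective (fun f : (mixM F).obj X₀ ⟶ Yt => f.1.2) ∧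
    (∀ (X₀' : C) (g : X₀' ⟶ X₀) (f : (mixM F).obj X₀ ⟶ Yt),
      ((mixM F).map g ≫ f).1.2 = g ≫ f.1.2) ∧
    (∀ (Yt' : Mixed C F) (h : Yt ⟶ Yt') (f : (mixM F).obj X₀ ⟶ Yt),
      (f ≫ h).1.2 = f.1.2 ≫ h.1.2) :=
  ⟨(mixMHomEquiv F X₀ Yt).bijective, fun _ _ _ => rfl, fun _ _ _ => rfl⟩
end

section
/- The twixing functor δ* : tC → mC, (X,Φ) ↦ (X,X,Φ,Φ), factors as the composition of an equivalence of categories α : tC → mC[tdd] with the forgetful functor mC[tdd] → mC, where mC[tdd] is the category of mixed objects equipped with a twisted descent datum. In particular, a mixed object X̃ descends to a twisted object if and only if it admits an endomorphism f with τ*(f) ∘ f = id_{X̃}. -/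
open CategoryTheory CategoryTheory.Limits

universe v u

variable {C : Type u} [Category.{v} C]

/-- The category `mC[tdd]` of mixed objects equipped with a twisted descent datum. -/
structure Tdd (C : Type u) [Category.{v} C] (F : 𝟭 C ⟶ 𝟭 C) where
  A : Mixed C F
  d : A ⟶ (tau F).obj A
  hd : d ≫ (tau F).map d = 𝟙 A

namespace Tdd

variable {C : Type u} [Category.{v} C] {F : 𝟭 C ⟶ 𝟭 C}

instance : Category (Tdd C F) where
  Hom A B := { u : A.A ⟶ B.A // A.d ≫ (tau F).map u = u ≫ B.d }
  id A := ⟨𝟙 A.A, by simp⟩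
  comp {A B D} f g := ⟨f.1 ≫ g.1, by
    rw [Functor.map_comp, ← Category.assoc, f.2, Category.assoc, g.2, ← Category.assoc]⟩
  id_comp f := Subtype.ext (Category.id_comp _)
  comp_id f := Subtype.ext (Category.comp_id _)
  assoc f g h := Subtype.ext (Category.assoc _ _ _)

end Tdd

/-- The forgetful functor `mC[tdd] ⥤ mC`. -/
def tddForget (C : Type u) [Category.{v} C] (F : 𝟭 C ⟶ 𝟭 C) : Tdd C F ⥤ Mixed C F where
  obj A := A.A
  map u := u.1
  map_id _ := rfl
  map_comp _ _ := rfl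

/-!
A twisted descent datum on `(X₁, X₂, φ₁, φ₂)` is a pair of mutually inverse isomorphisms
`d₁ : X₁ ⟶ X₂`, `d₂ : X₂ ⟶ X₁` intertwining `φ₁` and `φ₂`. Transporting `φ₂` along `d₁` gives
`Φ := d₁ ≫ φ₂` with `Φ ≫ Φ = φ₁ ≫ φ₂ = F_{X₁}`, and `(𝟙, d₁) : δ*(X₁, Φ) ⟶ (X₁, X₂, φ₁, φ₂)` is
an isomorphism compatible with the identity datum on `δ*(X₁, Φ)`; so `α = (δ*, 𝟙)` is essentially
surjective. A morphism between objects with identity data has equal components, which makes `α`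
fully faithful. Finally, descent data transport along isomorphisms, so every mixed object
isomorphic to some `δ* T` carries one.
-/

variable {F : 𝟭 C ⟶ 𝟭 C}

namespace Mixed

@[simp] lemma comp_fst {A B D : Mixed C F} (f : A ⟶ B) (g : B ⟶ D) :
    (f ≫ g).1.1 = f.1.1 ≫ g.1.1 := rfl

@[simp] lemma comp_snd {A B D : Mixed C F} (f : A ⟶ B) (g : B ⟶ D) :
    (f ≫ g).1.2 = f.1.2 ≫ g.1.2 := rfl

@[simp] lemma id_fst (A : Mixed C F) : (𝟙 A : A ⟶ A).1.1 = 𝟙 A.X₁ := rfl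

@[simp] lemma id_snd (A : Mixed C F) : (𝟙 A : A ⟶ A).1.2 = 𝟙 A.X₂ := rfl

lemma isIso_of_isIso_fst_snd {A B : Mixed C F} (f : A ⟶ B) (_ : IsIso f.1.1) (_ : IsIso f.1.2) :
    IsIso f :=
  ⟨⟨⟨(inv f.1.1, inv f.1.2), by
      constructor
      · rw [IsIso.eq_inv_comp, ← Category.assoc, ← f.2.1, Category.assoc, IsIso.hom_inv_id,
          Category.comp_id]
      · rw [IsIso.eq_inv_comp, ← Category.assoc, ← f.2.2, Category.assoc, IsIso.hom_inv_id,
          Category.comp_id]⟩,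
    by ext <;> simp, by ext <;> simp⟩⟩

end Mixed

namespace Tdd

@[ext]
lemma hom_ext {A B : Tdd C F} {f g : A ⟶ B} (h : f.1 = g.1) : f = g :=
  Subtype.ext h

def d₁ (B : Tdd C F) : B.A.X₁ ⟶ B.A.X₂ := B.d.1.1

def d₂ (B : Tdd C F) : B.A.X₂ ⟶ B.A.X₁ := B.d.1.2

@[simp]
lemma d₁_comp_d₂ (B : Tdd C F) : B.d₁ ≫ B.d₂ = 𝟙 B.A.X₁ :=
  congrArg (fun p => p.1.1) B.hd

@[simp]
lemma d₂_comp_d₁ (B : Tdd C F) : B.d₂ ≫ B.d₁ = 𝟙 B.A.X₂ :=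
  congrArg (fun p => p.1.2) B.hd

lemma φ₂_comp_d₁ (B : Tdd C F) : B.A.φ₂ ≫ B.d₁ = B.d₂ ≫ B.A.φ₁ := B.d.2.2

def descend (B : Tdd C F) : Twisted C F where
  X := B.A.X₁
  tw := B.d₁ ≫ B.A.φ₂
  tw_tw := by rw [Category.assoc, reassoc_of% B.φ₂_comp_d₁, reassoc_of% B.d₁_comp_d₂, B.A.h₁]

instance isIso_d₁ (B : Tdd C F) : IsIso B.d₁ := ⟨⟨B.d₂, B.d₁_comp_d₂, B.d₂_comp_d₁⟩⟩

instance : (tddForget C F).ReflectsIsomorphisms where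
  reflects {A B} u (_ : IsIso u.1) :=
    ⟨⟨⟨inv u.1, by
        rw [Functor.map_inv, IsIso.eq_inv_comp, ← Category.assoc, ← u.2, Category.assoc,
          IsIso.hom_inv_id, Category.comp_id]⟩,
      hom_ext (IsIso.hom_inv_id u.1), hom_ext (IsIso.inv_hom_id u.1)⟩⟩

def transport (B : Tdd C F) {A : Mixed C F} (e : B.A ≅ A) : Tdd C F where
  A := A
  d := e.inv ≫ B.d ≫ (tau F).map e.hom
  hd := by
    simp only [Functor.map_comp, Category.assoc, Iso.map_hom_inv_id_assoc, reassoc_of% B.hd]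
    exact (e.inv ≫= Category.id_comp e.hom).trans e.inv_hom_id

end Tdd

/-- The functor `α` of the paper. -/
def deltaStarTdd (F : 𝟭 C ⟶ 𝟭 C) : Twisted C F ⥤ Tdd C F where
  obj T := ⟨(deltaStar F).obj T, 𝟙 _, Category.id_comp _⟩
  map f := ⟨(deltaStar F).map f,
    by ext <;> exact (Category.id_comp _).trans (Category.comp_id _).symm⟩

lemma deltaStarTdd_hom_snd_eq_fst {T T' : Twisted C F}
    (u : (deltaStarTdd F).obj T ⟶ (deltaStarTdd F).obj T') : u.1.1.2 = u.1.1.1 := by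
  have h : 𝟙 T.X ≫ u.1.1.2 = u.1.1.1 ≫ 𝟙 T'.X := congrArg (fun p => p.1.1) u.2
  exact (Category.id_comp _).symm.trans (h.trans (Category.comp_id _))

def fullyFaithfulDeltaStarTdd : (deltaStarTdd F).FullyFaithful where
  preimage {T T'} u := ⟨u.1.1.1, by
    have h : T.tw ≫ u.1.1.2 = u.1.1.1 ≫ T'.tw := u.1.2.1
    rwa [deltaStarTdd_hom_snd_eq_fst] at h⟩
  map_preimage u := by ext <;> simp [deltaStarTdd, deltaStar, deltaStarTdd_hom_snd_eq_fst u]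

namespace Tdd

def descendHom (B : Tdd C F) : (deltaStarTdd F).obj B.descend ⟶ B :=
  ⟨⟨(𝟙 B.A.X₁, B.d₁),
    show (B.d₁ ≫ B.A.φ₂) ≫ B.d₁ = 𝟙 _ ≫ B.A.φ₁ ∧ (B.d₁ ≫ B.A.φ₂) ≫ 𝟙 _ = B.d₁ ≫ B.A.φ₂ by
      simp [B.φ₂_comp_d₁, reassoc_of% B.d₁_comp_d₂]⟩,
    Mixed.hom_ext (show 𝟙 _ ≫ B.d₁ = 𝟙 _ ≫ B.d₁ from rfl)
      (show 𝟙 _ ≫ 𝟙 _ = B.d₁ ≫ B.d₂ by simp)⟩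

instance (B : Tdd C F) : IsIso B.descendHom :=
  have : IsIso ((tddForget C F).map B.descendHom) :=
    Mixed.isIso_of_isIso_fst_snd _ (IsIso.id _) B.isIso_d₁
  isIso_of_reflects_iso _ (tddForget C F)

end Tdd

instance : (deltaStarTdd F).IsEquivalence where
  faithful := fullyFaithfulDeltaStarTdd.faithful
  full := fullyFaithfulDeltaStarTdd.full
  essSurj := ⟨fun B => ⟨B.descend, ⟨asIso B.descendHom⟩⟩⟩

/-- The twixing functor `δ* : tC ⥤ mC` factors as an equivalence
`α : tC ⥤ mC[tdd]` followed by the forgetful functor `mC[tdd] ⥤ mC`.  In particular, a mixed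
object descends to a twisted object if and only if it admits a twisted descent datum. -/
theorem deltaStar_factorization {C : Type u} [Category.{v} C] (F : 𝟭 C ⟶ 𝟭 C) :
    (∃ α : Twisted C F ⥤ Tdd C F, α.IsEquivalence ∧ α ⋙ tddForget C F = deltaStar F) ∧
    (∀ A : Mixed C F,
      (∃ T : Twisted C F, Nonempty ((deltaStar F).obj T ≅ A)) ↔
        ∃ f : A ⟶ (tau F).obj A, f ≫ (tau F).map f = 𝟙 A) := by
  refine ⟨⟨deltaStarTdd F, inferInstance, rfl⟩, fun A => ⟨?_, ?_⟩⟩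
  · rintro ⟨T, ⟨e⟩⟩
    exact ⟨_, (((deltaStarTdd F).obj T).transport e).hd⟩
  · rintro ⟨d, hd⟩
    exact ⟨Tdd.descend ⟨A, d, hd⟩, ⟨(tddForget C F).mapIso (asIso (Tdd.descendHom ⟨A, d, hd⟩))⟩⟩
end

section
/- Let S be an object of C and consider a diagram of S-morphisms X →^π X̄ →^{π'} △X with π'∘π = F_{X/S} (the relative F of X over S). If π is an epimorphism, then △π ∘ π' = F_{X̄/S}, i.e., the diagram is a relative S-factorization. -/
open CategoryTheory CategoryTheory.Limits

universe v u

variable {C : Type u} [Category.{v} C]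

/-- `F_{X/S} : X ⟶ △X`, where `△X = X ×_{q, F_S} S`. -/
noncomputable def relFrobenius (F : 𝟭 C ⟶ 𝟭 C) {S X : C} (q : X ⟶ S) [HasPullback q (F.app S)] :
    X ⟶ pullback q (F.app S) :=
  pullback.lift (F.app X) q (by simpa using (F.naturality q).symm)

theorem relFrobenius_comp_map (F : 𝟭 C ⟶ 𝟭 C) {S X Y : C} (qX : X ⟶ S) (qY : Y ⟶ S)
    [HasPullback qX (F.app S)] [HasPullback qY (F.app S)] (f : X ⟶ Y) (hf : f ≫ qY = qX) :
    relFrobenius F qX ≫ pullback.map qX (F.app S) qY (F.app S) f (𝟙 S) (𝟙 S)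
        (by simp [hf]) (by simp)
      = f ≫ relFrobenius F qY := by
  apply pullback.hom_ext
  · simp only [relFrobenius, Category.assoc, pullback.lift_fst, pullback.lift_fst_assoc]
    exact (F.naturality f).symm
  · simp only [relFrobenius, Category.assoc, pullback.lift_snd, pullback.lift_snd_assoc, hf]
    exact Category.comp_id qX

/-- Let `q_X : X ⟶ S` and `q_X̄ : X̄ ⟶ S` be `S`-objects, and let
`π : X ⟶ X̄`, `π' : X̄ ⟶ △X` be `S`-morphisms with `π ≫ π' = F_{X/S}`.  If `π` is an
epimorphism, then `π' ≫ △π = F_{X̄/S}`, i.e. the diagram is a relative `S`-factorization. -/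
theorem relFactorization_of_epi {C : Type u} [Category.{v} C] (F : 𝟭 C ⟶ 𝟭 C)
    {S X Xb : C} (qX : X ⟶ S) (qXb : Xb ⟶ S)
    [HasPullback qX (F.app S)] [HasPullback qXb (F.app S)]
    (π : X ⟶ Xb) (π' : Xb ⟶ pullback qX (F.app S))
    (hπ : π ≫ qXb = qX)
    [Epi π]
    (hfac : π ≫ π' = pullback.lift (F.app X) qX (by simpa using (F.naturality qX).symm)) :
    π' ≫ pullback.map qX (F.app S) qXb (F.app S) π (𝟙 S) (𝟙 S)
        (by simp [hπ]) (by simp)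
      = pullback.lift (F.app Xb) qXb (by simpa using (F.naturality qXb).symm) := by
  rw [← cancel_epi π, reassoc_of% hfac]
  exact relFrobenius_comp_map F qX qXb π hπ
end

section
/- For an object S of C, relative S-factorizations X →^π X̄ →^{π'} △X correspond to mixed objects over the visible base m(S): from a relative S-factorization one obtains the mixed m(S)-object (X̄, X, p₁∘π', π), where p₁ : △X → X is the canonical projection, and conversely every mixed m(S)-object arises uniquely this way. -/
/-!
A morphism from a mixed object `(X̄, X, φ₁, φ₂)` to `m(S) = (S, S, F_S, 𝟙)` is a pair
`q̄ : X̄ ⟶ S`, `q : X ⟶ S` with `φ₁ ≫ q = q̄ ≫ F_S` and `φ₂ ≫ q̄ = q`. The first equation is what is needed for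
the lift `π' = (φ₁, q̄) : X̄ ⟶ △X = X ×_S S` (along `F_S`), the second says that
`π = φ₂` lies over `S`, and on the two pullback projections the factorization identities become
the mixed identities `φ₂ ≫ φ₁ = F_X`, `φ₁ ≫ φ₂ = F_X̄`. Conversely a map into the pullback is
determined by its projections `p₁ ∘ π'` and `q̄`, so the two constructions are mutually inverse.
-/

open CategoryTheory CategoryTheory.Limits

universe v u

variable {C : Type u} [Category.{v} C]

variable (F : 𝟭 C ⟶ 𝟭 C) [HasPullbacks C] (S : C)

/-- A relative `S`-factorization `X ⟶ X̄ ⟶ △X` of the relative `F` of `X` over `S`. -/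
structure RelFact where
  X : C
  Xb : C
  qX : X ⟶ S
  qXb : Xb ⟶ S
  π : X ⟶ Xb
  π' : Xb ⟶ pullback qX (F.app S)
  hπ : π ≫ qXb = qX
  hπ' : π' ≫ pullback.snd qX (F.app S) = qXb
  fac₁ : π ≫ π' = pullback.lift (F.app X) qX (by simpa using (F.naturality qX).symm)
  fac₂ : π' ≫ pullback.map qX (F.app S) qXb (F.app S) π (𝟙 S) (𝟙 S)
      (by simp [hπ]) (by simp)
    = pullback.lift (F.app Xb) qXb (by simpa using (F.naturality qXb).symm)

/-- The mixed object `(X̄, X, p₁ ∘ π', π)` attached to a relative `S`-factorization. -/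
noncomputable def RelFact.toMixed (r : RelFact F S) : Mixed C F where
  X₁ := r.Xb
  X₂ := r.X
  φ₁ := r.π' ≫ pullback.fst r.qX (F.app S)
  φ₂ := r.π
  h₁ := by
    have h := congrArg (fun t => t ≫ pullback.fst r.qXb (F.app S)) r.fac₂
    simp only [Category.assoc, pullback.lift_fst] at h
    rw [← Category.assoc] at h
    exact h
  h₂ := by
    rw [← Category.assoc, r.fac₁, pullback.lift_fst]

/-- The corresponding mixed object over the visible base `m(S)`. -/
noncomputable def RelFact.toOver (r : RelFact F S) : Over ((mixM F).obj S) :=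
  Over.mk
    (⟨(r.qXb, r.qX), by
      constructor
      · show (r.π' ≫ pullback.fst r.qX (F.app S)) ≫ r.qX = r.qXb ≫ F.app S
        rw [Category.assoc, pullback.condition, ← Category.assoc, r.hπ']
      · show r.π ≫ r.qXb = r.qX ≫ 𝟙 S
        rw [r.hπ, Category.comp_id]⟩ :
      r.toMixed ⟶ (mixM F).obj S)


namespace RelFact

variable {F S}

lemma π'_eq_lift (r : RelFact F S) :
    r.π' = pullback.lift (r.π' ≫ pullback.fst r.qX (F.app S)) r.qXb
      (by rw [Category.assoc, pullback.condition, ← Category.assoc, r.hπ']) :=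
  pullback.hom_ext (by simp only [pullback.lift_fst]) (by simp only [pullback.lift_snd, r.hπ'])

noncomputable def ofMixed (M : Mixed C F) (q₁ : M.X₁ ⟶ S) (q₂ : M.X₂ ⟶ S)
    (w₁ : M.φ₁ ≫ q₂ = q₁ ≫ F.app S) (w₂ : M.φ₂ ≫ q₁ = q₂) : RelFact F S where
  X := M.X₂
  Xb := M.X₁
  qX := q₂
  qXb := q₁
  π := M.φ₂
  π' := pullback.lift M.φ₁ q₁ w₁
  hπ := w₂
  hπ' := pullback.lift_snd _ _ _
  fac₁ := pullback.hom_ext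
    (by simp only [Category.assoc, pullback.lift_fst, M.h₂])
    (by simp only [Category.assoc, pullback.lift_snd, w₂])
  fac₂ := pullback.hom_ext
    (by simp only [Category.assoc, pullback.lift_fst, pullback.lift_fst_assoc, M.h₁])
    (by rw [Category.assoc, pullback.lift_snd, pullback.lift_snd_assoc, pullback.lift_snd]
        exact Category.comp_id _)

noncomputable def ofOver (Y : Over ((mixM F).obj S)) : RelFact F S :=
  ofMixed Y.left Y.hom.1.1 Y.hom.1.2 Y.hom.2.1 (by simpa [mixM] using Y.hom.2.2)

theorem ofOver_toOver (r : RelFact F S) : ofOver (r.toOver F S) = r := by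
  have hπ' := π'_eq_lift r
  cases r
  unfold ofOver ofMixed toOver toMixed
  congr 1
  exact hπ'.symm

theorem toOver_ofOver (Y : Over ((mixM F).obj S)) : (ofOver Y).toOver F S = Y := by
  obtain ⟨⟨X₁, X₂, φ₁, φ₂, h₁, h₂⟩, ⟨⟨⟩⟩, ⟨⟨q₁, q₂⟩, w₁, w₂⟩⟩ := Y
  have hφ₁ : pullback.lift φ₁ q₁ w₁ ≫ pullback.fst q₂ (F.app S) = φ₁ := pullback.lift_fst _ _ _
  simp only [toOver, toMixed, ofOver, ofMixed, Over.mk, CostructuredArrow.mk]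
  congr 1
  · congr 1
  · rw [Subtype.heq_iff_coe_eq]
    intro _
    erw [hφ₁]
    rfl

variable (F S) in
noncomputable def equivOver : RelFact F S ≃ Over ((mixM F).obj S) where
  toFun := toOver F S
  invFun := ofOver
  left_inv := ofOver_toOver
  right_inv := toOver_ofOver

end RelFact

/-- Relative `S`-factorizations correspond bijectively to mixed objects over
the visible base `m(S)`, via `(X →^π X̄ →^{π'} △X) ↦ ((X̄, X, p₁ ∘ π', π) → m(S))`. -/
theorem relFact_equiv_mixedOver : Function.Bijective (RelFact.toOver F S) :=
  (RelFact.equivOver F S).bijective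
end

section
/- Let S̃ = (S₁,S₂,Φ_{S₁},Φ_{S₂}) be a mixed object with Φ_{S₂} an epimorphism, and let X̃ = (X₁,X₂) be an S̃-object. Then: (1) the map g : X₁(S₁) → X₁(S₂), v ↦ v∘Φ_{S₂}, and the map comp₁ : X̃(S̃) → X₂(S₂), (u,v) ↦ u, are both injective; (2) the square with top map comp₁, left map comp₂ : (u,v) ↦ v, right map f : X₂(S₂) → X₁(S₂), u ↦ Φ_{X₂}∘u, and bottom map g is a pullback square in the category of sets. -/
open CategoryTheory CategoryTheory.Limits

universe v u

variable {C : Type u} [Category.{v} C]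

section MixedPoints

variable {C : Type u} [Category.{v} C] {F : 𝟭 C ⟶ 𝟭 C}
variable (St Xt : Mixed C F) (q : Xt ⟶ St)

/-- The set `X̃(S̃)` of sections of the `S̃`-object `q : X̃ ⟶ S̃` in `mC`. -/
def MixSections : Type v := { p : St ⟶ Xt // p ≫ q = 𝟙 St }

/-- The set `X₁(S₁)` of sections of `X₁` over `S₁`. -/
def Sec₁ : Type v := { v : St.X₁ ⟶ Xt.X₁ // v ≫ q.1.1 = 𝟙 St.X₁ }

/-- The set `X₂(S₂)` of sections of `X₂` over `S₂`. -/
def Sec₂ : Type v := { u : St.X₂ ⟶ Xt.X₂ // u ≫ q.1.2 = 𝟙 St.X₂ }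

/-- The set `X₁(S₂)` of `S₂`-points of `X₁` (lying over `Φ_{S₂} : S₂ ⟶ S₁`). -/
def Sec₁₂ : Type v := { w : St.X₂ ⟶ Xt.X₁ // w ≫ q.1.1 = St.φ₂ }

/-- `g : X₁(S₁) → X₁(S₂)`, `v ↦ v ∘ Φ_{S₂}`. -/
def secG : Sec₁ St Xt q → Sec₁₂ St Xt q := fun v =>
  ⟨St.φ₂ ≫ v.1, by rw [Category.assoc, v.2, Category.comp_id]⟩

/-- `f : X₂(S₂) → X₁(S₂)`, `u ↦ Φ_{X₂} ∘ u`. -/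
def secF : Sec₂ St Xt q → Sec₁₂ St Xt q := fun u =>
  ⟨u.1 ≫ Xt.φ₂, by rw [Category.assoc, q.2.2, ← Category.assoc, u.2, Category.id_comp]⟩

/-- `comp₁ : X̃(S̃) → X₂(S₂)`, `(u, v) ↦ u` (the `S₂`-component). -/
def secC₁ : MixSections St Xt q → Sec₂ St Xt q := fun p =>
  ⟨p.1.1.2, congrArg (fun h => h.1.2) p.2⟩

/-- `comp₂ : X̃(S̃) → X₁(S₁)`, `(u, v) ↦ v` (the `S₁`-component). -/
def secC₂ : MixSections St Xt q → Sec₁ St Xt q := fun p =>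
  ⟨p.1.1.1, congrArg (fun h => h.1.1) p.2⟩

/-- If `Φ_{S₂}` is an epimorphism then (1) `g` and `comp₁` are injective, and
(2) the square formed by `comp₁`, `comp₂`, `f`, `g` is a pullback square in `Set`: the induced
map from `X̃(S̃)` to the fibre product of `X₂(S₂)` and `X₁(S₁)` over `X₁(S₂)` is bijective. -/
theorem mixed_points_pullback [Epi St.φ₂] :
    Function.Injective (secG St Xt q) ∧
    Function.Injective (secC₁ St Xt q) ∧
    Function.Bijective (fun p : MixSections St Xt q =>
      (⟨(secC₁ St Xt q p, secC₂ St Xt q p),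
          Subtype.ext p.1.2.2.symm⟩ :
        { uv : Sec₂ St Xt q × Sec₁ St Xt q //
            secF St Xt q uv.1 = secG St Xt q uv.2 })) := by
  refine ⟨?_, ?_, ?_, ?_⟩
  · rintro ⟨v, hv⟩ ⟨v', hv'⟩ h
    have : St.φ₂ ≫ v = St.φ₂ ≫ v' := congrArg Subtype.val h
    exact Subtype.ext ((cancel_epi St.φ₂).mp this)
  · rintro ⟨⟨⟨v, u⟩, h1, h2⟩, hp⟩ ⟨⟨⟨v', u'⟩, h1', h2'⟩, hp'⟩ h
    have hu : u = u' := congrArg Subtype.val h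
    subst hu
    have hv : v = v' := by
      apply (cancel_epi St.φ₂).mp
      rw [h2, h2']
    subst hv
    rfl
  · rintro p p' h
    have hu : p.1.1.2 = p'.1.1.2 := congrArg (fun x => x.1.1.1) h
    have hv : p.1.1.1 = p'.1.1.1 := congrArg (fun x => x.1.2.1) h
    exact Subtype.ext (Subtype.ext (Prod.ext hv hu))
  · rintro ⟨⟨⟨u, hu⟩, ⟨v, hv⟩⟩, huv⟩
    have huv' : u ≫ Xt.φ₂ = St.φ₂ ≫ v := congrArg Subtype.val huv
    have h1 : St.φ₁ ≫ u = v ≫ Xt.φ₁ := by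
      apply (cancel_epi St.φ₂).mp
      rw [← Category.assoc, St.h₂, ← Category.assoc, ← huv', Category.assoc, Xt.h₂]
      exact (F.naturality u).symm
    refine ⟨⟨⟨(v, u), h1, huv'.symm⟩, ?_⟩, rfl⟩
    exact Subtype.ext (Prod.ext hv hu)

end MixedPoints
end

section
/- Let k be a field with an endomorphism θ satisfying θ(θ(x)) = x^p for all x (a Tits endomorphism), with p = 3 (or more generally p > 2). Then the equations θ(x)/x = −1 and x^{p−1} = −1 have no solutions in k^×. In particular such a field is never algebraically closed. -/
open Polynomial Finset in
lemma fixed_of_pow_card (p : ℕ) (hp : p.Prime) (k : Type*) [Field k] [CharP k p]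
    (x : k) (hx : x ^ p = x) : ∃ a : ZMod p, ZMod.castHom dvd_rfl k a = x := by
  haveI : Fact p.Prime := ⟨hp⟩
  classical
  set φ := ZMod.castHom (dvd_rfl : p ∣ p) k with hφ
  set f : k[X] := X ^ p - X with hf
  have hf0 : f ≠ 0 := FiniteField.X_pow_card_sub_X_ne_zero k hp.one_lt
  have hdeg : f.natDegree = p := FiniteField.X_pow_card_sub_X_natDegree_eq k hp.one_lt
  have hroot : ∀ y : k, y ^ p = y → y ∈ f.roots := by
    intro y hy
    rw [mem_roots hf0]
    simp [hf, hy]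
  have hcastinj : Function.Injective φ := ZMod.castHom_injective k
  have hsub : (Finset.univ.image φ) ⊆ f.roots.toFinset := by
    intro y hy
    simp only [Finset.mem_image] at hy
    obtain ⟨a, -, rfl⟩ := hy
    rw [Multiset.mem_toFinset]
    apply hroot
    rw [← map_pow, ZMod.pow_card]
  have hcard : f.roots.toFinset.card ≤ p := by
    calc f.roots.toFinset.card ≤ Multiset.card f.roots := f.roots.toFinset_card_le
    _ ≤ f.natDegree := f.card_roots'
    _ = p := hdeg
  have hcardimg : (Finset.univ.image φ).card = p := by
    rw [Finset.card_image_of_injective _ hcastinj, Finset.card_univ, ZMod.card]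
  have heq : (Finset.univ.image φ) = f.roots.toFinset :=
    Finset.eq_of_subset_of_card_le hsub (hcard.trans_eq hcardimg.symm)
  have hx' : x ∈ f.roots.toFinset := Multiset.mem_toFinset.2 (hroot x hx)
  rw [← heq, Finset.mem_image] at hx'
  obtain ⟨a, -, ha⟩ := hx'
  exact ⟨a, ha⟩

/-- Let `k` be a field of characteristic `p > 2` with a Tits endomorphism `θ`
(i.e. `θ ∘ θ` is the Frobenius `x ↦ x ^ p`).  Then the equations `θ(x)/x = -1` and
`x ^ (p - 1) = -1` have no solutions; in particular `k` is not algebraically closed. -/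
theorem tits_endomorphism_no_solutions (p : ℕ) (hp : p.Prime) (hp2 : 2 < p)
    (k : Type*) [Field k] [CharP k p]
    (θ : k →+* k) (hθ : ∀ x : k, θ (θ x) = x ^ p) :
    (∀ x : k, x ≠ 0 → θ x / x ≠ -1) ∧
    (∀ x : k, x ^ (p - 1) ≠ -1) ∧
    ¬ IsAlgClosed k := by
  haveI : Fact p.Prime := ⟨hp⟩
  have h2ne : (2 : k) ≠ 0 := by
    have : ((2 : ℕ) : k) ≠ 0 := by
      rw [Ne, CharP.cast_eq_zero_iff k p]
      intro hdvd
      exact absurd ((Nat.prime_dvd_prime_iff_eq hp Nat.prime_two).1 hdvd) (by omega)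
    simpa using this
  have h1 : ∀ x : k, x ≠ 0 → θ x / x ≠ -1 := by
    intro x hx h
    have hθx : θ x = -x := by
      field_simp at h
      exact h
    have hxp : x ^ p = x := by
      have := hθ x
      rw [hθx, map_neg, hθx, neg_neg] at this
      exact this.symm
    obtain ⟨a, ha⟩ := fixed_of_pow_card p hp k x hxp
    have hcomp : θ.comp (ZMod.castHom (dvd_rfl : p ∣ p) k) = ZMod.castHom dvd_rfl k :=
      RingHom.ext_zmod _ _
    have hfix : θ x = x := by
      rw [← ha, ← RingHom.comp_apply, hcomp]
    have hxx : (2 : k) * x = 0 := by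
      have h' : x = -x := hfix.symm.trans hθx
      linear_combination h'
    rcases mul_eq_zero.1 hxx with h | h
    · exact h2ne h
    · exact hx h
  have h2 : ∀ x : k, x ^ (p - 1) ≠ -1 := by
    intro x hx
    have hx0 : x ≠ 0 := by
      rintro rfl
      rw [zero_pow (by omega : p - 1 ≠ 0)] at hx
      exact one_ne_zero (α := k) (by linear_combination hx)
    have hxp : x ^ p = -x := by
      have : x ^ p = x ^ (p - 1) * x := by
        rw [← pow_succ]
        congr 1
        omega
      rw [this, hx]
      ring
    set y := x * θ x with hy
    have hy0 : y ≠ 0 := mul_ne_zero hx0 (by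
      intro h
      exact hx0 (θ.injective (by rw [h, map_zero])))
    have hθy : θ y = -y := by
      rw [hy, map_mul, hθ, hxp]
      ring
    exact h1 y hy0 (by rw [hθy, neg_div, div_self hy0])
  refine ⟨h1, h2, fun hac => ?_⟩
  obtain ⟨x, hx⟩ := hac.exists_pow_nat_eq (-1 : k) (n := p - 1) (by omega)
  exact h2 x hx
end

section
/- Let k ⊆ ℓ be fields of characteristic 2 with ℓ² ⊆ k, giving a mixed field m = (k,ℓ,κ,λ) with κ : k → ℓ the composition of squaring with inclusion and λ : ℓ → k the inclusion. Define ℘̃ : k ⊕ ℓ → k ⊕ ℓ by ℘̃(x,y) = (x + λ(y), κ(x) + y) (additively, using characteristic 2). Then the maps u ↦ class of (u,0) and (u,v) ↦ class of u + λ(v) are mutually inverse bijections between coker(℘) = k/℘(k) and coker(℘̃) = (k⊕ℓ)/im(℘̃), where ℘(b) = b² + b is the Artin–Schreier map of k. -/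
section ArtinSchreier

variable (k ℓ : Type*) [Field k] [Field ℓ] [CharP k 2] [CharP ℓ 2]
variable (κ : k →+* ℓ) (lam : ℓ →+* k)

/-- The Artin–Schreier map `℘ : k → k`, `b ↦ b² + b`, as an additive map (characteristic 2). -/
def artinSchreier : k →+ k where
  toFun b := b ^ 2 + b
  map_zero' := by simp
  map_add' a b := by
    show (a + b) ^ 2 + (a + b) = (a ^ 2 + a) + (b ^ 2 + b)
    rw [CharTwo.add_sq]
    ring

/-- The mixed Artin–Schreier map `℘̃ : k ⊕ ℓ → k ⊕ ℓ`, `(x, y) ↦ (x + λ(y), κ(x) + y)`. -/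
def mixedArtinSchreier : (k × ℓ) →+ (k × ℓ) where
  toFun p := (p.1 + lam p.2, κ p.1 + p.2)
  map_zero' := by simp
  map_add' p q := by
    show ((p.1 + q.1) + lam (p.2 + q.2), κ (p.1 + q.1) + (p.2 + q.2)) =
      (p.1 + lam p.2, κ p.1 + p.2) + (q.1 + lam q.2, κ q.1 + q.2)
    simp only [map_add, Prod.mk_add_mk, Prod.mk.injEq]
    constructor <;> ring

/-- Let `m = (k, ℓ, κ, λ)` be a mixed field of characteristic 2 (so
`λ ∘ κ` and `κ ∘ λ` are the squaring maps).  Then `u ↦ [(u, 0)]` and `(u, v) ↦ [u + λ(v)]`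
are mutually inverse bijections between `coker ℘ = k/℘(k)` and
`coker ℘̃ = (k ⊕ ℓ)/im ℘̃`. -/
theorem coker_artinSchreier_equiv
    (hlk : ∀ x : k, lam (κ x) = x ^ 2) (hkl : ∀ y : ℓ, κ (lam y) = y ^ 2) :
    ∃ e : (k ⧸ (artinSchreier k).range) ≃ ((k × ℓ) ⧸ (mixedArtinSchreier k ℓ κ lam).range),
      (∀ u : k, e (QuotientAddGroup.mk u) = QuotientAddGroup.mk ((u, 0) : k × ℓ)) ∧
      (∀ p : k × ℓ, e.symm (QuotientAddGroup.mk p) = QuotientAddGroup.mk (p.1 + lam p.2)) := by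
  -- forward map
  let F : k →+ ((k × ℓ) ⧸ (mixedArtinSchreier k ℓ κ lam).range) :=
    (QuotientAddGroup.mk' _).comp (AddMonoidHom.inl k ℓ)
  have hF : ∀ u ∈ (artinSchreier k).range, F u = 0 := by
    rintro _ ⟨b, rfl⟩
    refine (QuotientAddGroup.eq_zero_iff _).mpr ⟨(b, κ b), ?_⟩
    show (b + lam (κ b), κ b + κ b) = (b ^ 2 + b, 0)
    rw [hlk, CharTwo.add_self_eq_zero, add_comm]
  let f := QuotientAddGroup.lift _ F hF
  -- backward map
  let G : (k × ℓ) →+ (k ⧸ (artinSchreier k).range) :=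
    (QuotientAddGroup.mk' _).comp
      ((AddMonoidHom.fst k ℓ) + lam.toAddMonoidHom.comp (AddMonoidHom.snd k ℓ))
  have hG : ∀ p ∈ (mixedArtinSchreier k ℓ κ lam).range, G p = 0 := by
    rintro _ ⟨⟨x, y⟩, rfl⟩
    refine (QuotientAddGroup.eq_zero_iff _).mpr ⟨x, ?_⟩
    show artinSchreier k x = (x + lam y) + lam (κ x + y)
    show x ^ 2 + x = (x + lam y) + lam (κ x + y)
    rw [map_add, hlk]
    ring_nf
    simp [CharTwo.two_eq_zero]
  let g := QuotientAddGroup.lift _ G hG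
  have hfg : ∀ q, f (g q) = q := by
    intro q
    induction q using QuotientAddGroup.induction_on with
    | H p =>
      show QuotientAddGroup.mk ((p.1 + lam p.2, 0) : k × ℓ) = QuotientAddGroup.mk p
      refine QuotientAddGroup.eq.mpr ⟨(0, p.2), ?_⟩
      show (0 + lam p.2, κ 0 + p.2) = -(p.1 + lam p.2, 0) + p
      rw [map_zero, zero_add, zero_add, CharTwo.neg_eq]
      show (lam p.2, p.2) = (p.1 + lam p.2 + p.1, 0 + p.2)
      rw [zero_add]
      congr 1
      ring_nf
      simp [CharTwo.two_eq_zero]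
  have hgf : ∀ q, g (f q) = q := by
    intro q
    induction q using QuotientAddGroup.induction_on with
    | H u =>
      show QuotientAddGroup.mk (u + lam 0) = QuotientAddGroup.mk u
      rw [map_zero, add_zero]
  refine ⟨⟨f, g, hgf, hfg⟩, fun u => rfl, fun p => rfl⟩

end ArtinSchreier
end

section
/- Let C be a category with a natural transformation F of the identity functor, and let f : T → S be a morphism in C such that C admits pullbacks along f and along all F_S^n. Then the base-change functor f* : C_{/S} → C_{/T} extends to a functor 𝖿* between the fairies (semi-linear slice categories) C_{/S}^{(F)} → C_{/T}^{(F)}: for every arrow (g,n) : U → V in C_{/S}^{(F)} (meaning g : U → V in C with q_V ∘ g = F_S^n ∘ q_U) there is a unique induced arrow 𝖿*(g,n) : f*U → f*V lying over F_T^n, and this assignment is functorial and restricts to f* on linear arrows. -/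
/-!
Since `F` is natural, `f ∘ F_T^n = F_S^n ∘ f`, so for `(g, n) : U ⟶ V` the maps
`g ∘ pr₁ : f*U ⟶ V` and `F_T^n ∘ pr₂ : f*U ⟶ T` form a commutative square over `S`; the induced
arrow into the pullback `f*V` is the required one. Uniqueness, functoriality and the comparison
with `f*` all follow from the uniqueness part of the universal property of `f*V`, together with
`F_T^m ∘ F_T^n = F_T^(m+n)`.
-/

open CategoryTheory CategoryTheory.Limits

universe v u

variable {C : Type u} [Category.{v} C]

/-- The `n`-th power `F_S^n : S ⟶ S` of the component at `S` of an endomorphism `F` of the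
identity functor. -/
def Fpow (F : 𝟭 C ⟶ 𝟭 C) (S : C) : ℕ → (S ⟶ S)
  | 0 => 𝟙 S
  | n + 1 => Fpow F S n ≫ F.app S

theorem Fpow_zero (F : 𝟭 C ⟶ 𝟭 C) (S : C) : Fpow F S 0 = 𝟙 S := rfl

theorem Fpow_comp (F : 𝟭 C ⟶ 𝟭 C) (S : C) (m n : ℕ) :
    Fpow F S m ≫ Fpow F S n = Fpow F S (m + n) := by
  induction n with
  | zero => simp [Fpow]
  | succ n ih =>
      rw [show Fpow F S (n + 1) = Fpow F S n ≫ F.app S from rfl, ← Category.assoc, ih]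
      rfl

/-- The objects of the fairy (semi-linear slice category) `C_{/S}^{(F)}`: morphisms
`q : X ⟶ S`. -/
structure Fairy (F : 𝟭 C ⟶ 𝟭 C) (S : C) where
  X : C
  q : X ⟶ S

namespace Fairy

variable {F : 𝟭 C ⟶ 𝟭 C} {S : C}

/-- Morphisms of the fairy: pairs `(g, n)` with `q_B ∘ g = F_S^n ∘ q_A`. -/
structure Hom (A B : Fairy F S) where
  g : A.X ⟶ B.X
  n : ℕ
  w : g ≫ B.q = A.q ≫ Fpow F S n

theorem Hom.ext' {A B : Fairy F S} {f g : Hom A B} (h1 : f.g = g.g) (h2 : f.n = g.n) :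
    f = g := by
  cases f; cases g
  cases h2; cases h1; rfl

instance : Category (Fairy F S) where
  Hom := Hom
  id A := ⟨𝟙 A.X, 0, by simp [Fpow_zero]⟩
  comp {A B D} f g := ⟨f.g ≫ g.g, f.n + g.n, by
    rw [Category.assoc, g.w, ← Category.assoc, f.w, Category.assoc, Fpow_comp]⟩
  id_comp f := Hom.ext' (Category.id_comp _) (Nat.zero_add _)
  comp_id f := Hom.ext' (Category.comp_id _) (Nat.add_zero _)
  assoc f g h := Hom.ext' (Category.assoc _ _ _) (Nat.add_assoc _ _ _)

end Fairy

theorem Fpow_naturality (F : 𝟭 C ⟶ 𝟭 C) {S T : C} (f : T ⟶ S) (n : ℕ) :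
    Fpow F T n ≫ f = f ≫ Fpow F S n := by
  induction n with
  | zero => simp [Fpow_zero]
  | succ n ih =>
    change (Fpow F T n ≫ F.app T) ≫ f = f ≫ Fpow F S n ≫ F.app S
    have hF : F.app T ≫ f = f ≫ F.app S := (F.naturality f).symm
    rw [Category.assoc, hF, ← Category.assoc, ih, Category.assoc]

namespace Fairy

variable {F : 𝟭 C ⟶ 𝟭 C} {S T : C}

@[simp]
theorem id_g (A : Fairy F S) : Hom.g (𝟙 A) = 𝟙 A.X := rfl

@[simp]
theorem id_n (A : Fairy F S) : Hom.n (𝟙 A) = 0 := rfl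

@[simp]
theorem comp_g {A B D : Fairy F S} (h₁ : A ⟶ B) (h₂ : B ⟶ D) :
    (h₁ ≫ h₂).g = h₁.g ≫ h₂.g := rfl

@[simp]
theorem comp_n {A B D : Fairy F S} (h₁ : A ⟶ B) (h₂ : B ⟶ D) :
    (h₁ ≫ h₂).n = h₁.n + h₂.n := rfl

theorem Hom.pullback_condition {A B : Fairy F S} (h : A ⟶ B) (f : T ⟶ S) [HasPullback A.q f] :
    (pullback.fst A.q f ≫ h.g) ≫ B.q = (pullback.snd A.q f ≫ Fpow F T h.n) ≫ f := by
  rw [Category.assoc, h.w, ← Category.assoc, pullback.condition, Category.assoc,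
    Category.assoc, Fpow_naturality]

noncomputable def Hom.baseChange {A B : Fairy F S} (h : A ⟶ B) (f : T ⟶ S)
    [HasPullback A.q f] [HasPullback B.q f] : pullback A.q f ⟶ pullback B.q f :=
  pullback.lift _ _ (h.pullback_condition f)

section baseChange

variable {A B D : Fairy F S} (f : T ⟶ S) [HasPullback A.q f] [HasPullback B.q f]

@[simp]
theorem Hom.baseChange_fst (h : A ⟶ B) :
    h.baseChange f ≫ pullback.fst B.q f = pullback.fst A.q f ≫ h.g :=
  pullback.lift_fst _ _ _

@[simp]
theorem Hom.baseChange_snd (h : A ⟶ B) :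
    h.baseChange f ≫ pullback.snd B.q f = pullback.snd A.q f ≫ Fpow F T h.n :=
  pullback.lift_snd _ _ _

theorem Hom.eq_baseChange (h : A ⟶ B) {h' : pullback A.q f ⟶ pullback B.q f}
    (hfst : h' ≫ pullback.fst B.q f = pullback.fst A.q f ≫ h.g)
    (hsnd : h' ≫ pullback.snd B.q f = pullback.snd A.q f ≫ Fpow F T h.n) :
    h' = h.baseChange f :=
  pullback.hom_ext (by rw [hfst, Hom.baseChange_fst]) (by rw [hsnd, Hom.baseChange_snd])

@[simp]
theorem baseChange_id : Hom.baseChange (𝟙 A) f = 𝟙 (pullback A.q f) :=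
  ((𝟙 A : A ⟶ A).eq_baseChange f (by simp) (by simp [Fpow_zero])).symm

@[simp]
theorem baseChange_comp [HasPullback D.q f] (h₁ : A ⟶ B) (h₂ : B ⟶ D) :
    (h₁ ≫ h₂).baseChange f = h₁.baseChange f ≫ h₂.baseChange f :=
  ((h₁ ≫ h₂).eq_baseChange f
    (by rw [Category.assoc, Hom.baseChange_fst, ← Category.assoc, Hom.baseChange_fst,
      Category.assoc, comp_g])
    (by rw [Category.assoc, Hom.baseChange_snd, ← Category.assoc, Hom.baseChange_snd,
      Category.assoc, Fpow_comp, comp_n])).symm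

theorem Hom.baseChange_eq_pullbackMap (h : A ⟶ B) (hn : h.n = 0) :
    h.baseChange f = pullback.map A.q f B.q f h.g (𝟙 T) (𝟙 S)
      (by rw [Category.comp_id, h.w, hn, Fpow_zero, Category.comp_id]) (by simp) := by
  refine (h.eq_baseChange f ?_ ?_).symm <;>
    simp only [pullback.lift_fst, pullback.lift_snd, hn, Fpow_zero, Category.comp_id]

end baseChange

end Fairy

/-- Base change along `f : T ⟶ S` extends from the slice categories to the
fairies: for every semi-linear arrow `(g, n) : A ⟶ B` over `F_S^n` there is a unique induced
arrow `f*A ⟶ f*B` lying over `F_T^n` and compatible with `g`; this assignment is functorial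
and agrees with `f*` (i.e. `pullback.map`) on linear arrows (`n = 0`). -/
theorem fairy_baseChange (F : 𝟭 C ⟶ 𝟭 C) {S T : C} (f : T ⟶ S)
    [∀ (X : C) (q : X ⟶ S), HasPullback q f] :
    ∃ Fmap : ∀ (A B : Fairy F S), (A ⟶ B) → (pullback A.q f ⟶ pullback B.q f),
      (∀ (A B : Fairy F S) (h : A ⟶ B),
          Fmap A B h ≫ pullback.fst B.q f = pullback.fst A.q f ≫ h.g ∧
          Fmap A B h ≫ pullback.snd B.q f = pullback.snd A.q f ≫ Fpow F T h.n) ∧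
      (∀ (A B : Fairy F S) (h : A ⟶ B) (h' : pullback A.q f ⟶ pullback B.q f),
          h' ≫ pullback.fst B.q f = pullback.fst A.q f ≫ h.g →
          h' ≫ pullback.snd B.q f = pullback.snd A.q f ≫ Fpow F T h.n →
          h' = Fmap A B h) ∧
      (∀ A : Fairy F S, Fmap A A (𝟙 A) = 𝟙 (pullback A.q f)) ∧
      (∀ (A B D : Fairy F S) (h₁ : A ⟶ B) (h₂ : B ⟶ D),
          Fmap A D (h₁ ≫ h₂) = Fmap A B h₁ ≫ Fmap B D h₂) ∧
      (∀ (A B : Fairy F S) (h : A ⟶ B) (hn : h.n = 0),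
          Fmap A B h = pullback.map A.q f B.q f h.g (𝟙 T) (𝟙 S)
            (by rw [Category.comp_id, h.w, hn, Fpow_zero, Category.comp_id])
            (by simp)) :=
  ⟨fun _ _ h => h.baseChange f,
    fun _ _ h => ⟨h.baseChange_fst f, h.baseChange_snd f⟩,
    fun _ _ h _ hfst hsnd => h.eq_baseChange f hfst hsnd,
    fun _ => Fairy.baseChange_id f,
    fun _ _ _ h₁ h₂ => Fairy.baseChange_comp f h₁ h₂,
    fun _ _ h hn => h.baseChange_eq_pullbackMap f hn⟩
end
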